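/- Under the stated hypotheses, the twisted Long–Moody matrices satisfy the Artin relation for j = i: S_i G_i = G_{i+1} S_i for all 1 ≤ i ≤ n−1. -/

import Mathlib

open Matrix

namespace KLM

variable {k : Type*} [Field k]

/-- Assemble an `Nn × Nn` matrix from an `n × n` array of `N × N` blocks,
blocks being indexed by natural numbers (only indices `< n` are relevant). -/
def blk (n N : ℕ) (B : ℕ → ℕ → Matrix (Fin N) (Fin N) k) :
    Matrix (Fin n × Fin N) (Fin n × Fin N) k :=
  Matrix.of fun p q => B p.1.1 q.1.1 p.2 q.2

/-- The Dettweiler–Reiter convolution matrix `G_j = ρ^{DR}_λ(x_j)` (0-based index `j`):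
the identity except that the `j`-th block row is
`(λ(g_0−1), …, λ(g_{j−1}−1), λ g_j, g_{j+1}−1, …, g_{n−1}−1)`. -/
def G (n N : ℕ) (g : ℕ → Matrix (Fin N) (Fin N) k) (lam : k) (j : ℕ) :
    Matrix (Fin n × Fin N) (Fin n × Fin N) k :=
  blk n N fun r c =>
    if r = j then
      (if c < j then lam • (g c - 1) else if c = j then lam • g j else g c - 1)
    else if r = c then 1 else 0

/-- The Long–Moody matrix `S_i = ρ^{LM}(σ_i)` (0-based index `i`):
`(s_i ⊕ ⋯ ⊕ s_i) · diag(1, …, 1, R_i, 1, …, 1)` where `R_i` is the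
`2×2` block matrix with rows `(0, g_i)` and `(1, 1 − g_{i+1})`
placed in block rows/columns `i, i+1`. -/
def S (n N : ℕ) (g s : ℕ → Matrix (Fin N) (Fin N) k) (i : ℕ) :
    Matrix (Fin n × Fin N) (Fin n × Fin N) k :=
  blk n N fun r c =>
    if r = i ∧ c = i then 0
    else if r = i ∧ c = i + 1 then s i * g i
    else if r = i + 1 ∧ c = i then s i
    else if r = i + 1 ∧ c = i + 1 then s i * (1 - g (i + 1))
    else if r = c then s i
    else 0

lemma blk_mul (n N : ℕ) (A B : ℕ → ℕ → Matrix (Fin N) (Fin N) k) :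
    blk n N A * blk n N B = blk n N (fun r c => ∑ m : Fin n, A r m.1 * B m.1 c) := by
  ext p q
  simp [blk, Matrix.mul_apply, Fintype.sum_prod_type, Matrix.sum_apply]

lemma sum_single_blk {M : Type*} [AddCommMonoid M] {n : ℕ} (a : Fin n) (f : Fin n → M)
    (h : ∀ m : Fin n, (m : ℕ) ≠ (a : ℕ) → f m = 0) : ∑ m, f m = f a :=
  Finset.sum_eq_single_of_mem a (Finset.mem_univ a)
    (fun m _ hm => h m (fun hh => hm (Fin.ext hh)))

lemma sum_pair_blk {M : Type*} [AddCommMonoid M] {n : ℕ} (a b : Fin n) (hab : (a:ℕ) ≠ (b:ℕ))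
    (f : Fin n → M) (h : ∀ m : Fin n, (m:ℕ) ≠ (a:ℕ) → (m:ℕ) ≠ (b:ℕ) → f m = 0) :
    ∑ m, f m = f a + f b := by
  classical
  have hab' : a ≠ b := fun e => hab (congrArg _ e)
  rw [← Finset.sum_subset (Finset.subset_univ ({a, b} : Finset (Fin n)))]
  · rw [Finset.sum_pair hab']
  · intro x _ hx
    simp only [Finset.mem_insert, Finset.mem_singleton] at hx
    push_neg at hx
    exact h x (fun e => hx.1 (Fin.ext e)) (fun e => hx.2 (Fin.ext e))


set_option maxHeartbeats 1000000 in
/-- Artin relation for `j = i`: `S_i G_i = G_{i+1} S_i`. -/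
theorem twistedLM_artin_eq
    (N n : ℕ) (hN : 1 ≤ N) (hn : 2 ≤ n)
    (g s : ℕ → Matrix (Fin N) (Fin N) k) (lam : k) (hlam : lam ≠ 0)
    (hgu : ∀ j, j < n → IsUnit (g j))
    (hsu : ∀ i, i + 1 < n → IsUnit (s i))
    (hbr1 : ∀ i, i + 2 < n → s i * s (i + 1) * s i = s (i + 1) * s i * s (i + 1))
    (hbr2 : ∀ i j, i + 1 < n → j + 1 < n → (i + 2 ≤ j ∨ j + 2 ≤ i) →
      s i * s j = s j * s i)
    (ha1 : ∀ i, i + 1 < n → s i * g i = g (i + 1) * s i)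
    (ha2 : ∀ i, i + 1 < n → g (i + 1) * s i * g (i + 1) = g i * g (i + 1) * s i)
    (ha3 : ∀ i j, i + 1 < n → j < n → j ≠ i → j ≠ i + 1 → s i * g j = g j * s i) :
    ∀ i, i + 1 < n →
      S n N g s i * G n N g lam i = G n N g lam (i + 1) * S n N g s i := by
  intro i hi
  have hin : i < n := by omega
  have h1 := ha1 i hi
  have h2 := ha2 i hi
  have f1 : i ≠ i + 1 := by omega
  have f2 : i + 1 ≠ i := by omega
  unfold S G
  rw [blk_mul, blk_mul]
  unfold blk
  ext ⟨⟨r, hrn⟩, x⟩ ⟨⟨c, hcn⟩, y⟩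
  simp only [Matrix.of_apply]
  refine congrFun (congrFun ?_ x) y
  by_cases hri : r = i
  · obtain rfl := hri.symm
    rw [sum_single_blk (⟨i+1, hi⟩ : Fin n), sum_single_blk (⟨i, hin⟩ : Fin n)]
    · simp only [Fin.val_mk]
      by_cases hci : c = i
      · simp [f1, f2, hci]; rfl
      · by_cases hci1 : c = i + 1
        · simp [f1, f2, hci1]; rfl
        · simp [f1, f2, hci, hci1, Ne.symm hci, Ne.symm hci1]; rfl
    · intro m hm
      simp only [Fin.val_mk] at hm ⊢
      simp [f1, Ne.symm hm]
    · intro m hm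
      simp only [Fin.val_mk] at hm ⊢
      rcases eq_or_ne ((m : ℕ)) i with h | h
      · simp [h]
      · simp [f1, h, hm, Ne.symm h]
  · by_cases hri1 : r = i + 1
    · obtain rfl := hri1.symm
      rw [sum_pair_blk (⟨i, hin⟩ : Fin n) (⟨i+1, hi⟩ : Fin n) (by simp)]
      · by_cases hci : c = i
        · obtain rfl := hci.symm
          rw [sum_single_blk (⟨i+1, hi⟩ : Fin n)]
          · simp only [Fin.val_mk]
            simp [f1, f2, mul_smul_comm, smul_mul_assoc, h1]; rfl
          · intro m hm
            simp only [Fin.val_mk] at hm ⊢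
            rcases eq_or_ne ((m : ℕ)) i with h | h
            · simp [h]
            · simp [h, hm, Ne.symm h, Ne.symm hm]
        · by_cases hci1 : c = i + 1
          · obtain rfl := hci1.symm
            rw [sum_pair_blk (⟨i, hin⟩ : Fin n) (⟨i+1, hi⟩ : Fin n) (by simp)]
            · simp only [Fin.val_mk]
              have h3 : g (i+1) * (s i * g (i+1)) = g i * (s i * g i) := by
                rw [← mul_assoc, h2, mul_assoc, ← h1]
              simp [f1, f2]
              have e1 : (g i - 1) * (s i * g i) = g i * (s i * g i) - s i * g i := by
                noncomm_ring
              have e2 : g (i+1) * (s i * (1 - g (i+1)))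
                  = g (i+1) * s i - g (i+1) * (s i * g (i+1)) := by noncomm_ring
              have key : (g i - 1) * (s i * g i)
                  + g (i + 1) * (s i * (1 - g (i + 1))) = 0 := by
                rw [e1, e2, h3, h1]; abel
              rw [← smul_add, key, smul_zero, ← mul_add]
              have z : (g (i+1) - 1) + (1 - g (i+1))
                  = (0 : Matrix (Fin N) (Fin N) k) := by abel
              rw [z, mul_zero]
            · intro m hm1 hm2
              simp only [Fin.val_mk] at hm1 hm2 ⊢
              simp [hm1, hm2]
          · rw [sum_single_blk (⟨c, hcn⟩ : Fin n)]
            · simp only [Fin.val_mk]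
              have hc3 := ha3 i c hi hcn hci hci1
              rcases Nat.lt_or_ge c i with hlt | hge
              · have hlt1 : c < i + 1 := by omega
                simp [f1, f2, hci, hci1, hlt, hlt1, Ne.symm hci1, mul_smul_comm, smul_mul_assoc,
                  mul_sub, sub_mul, hc3]; rfl
              · have hq1 : ¬ c < i := by omega
                have hq2 : ¬ c < i + 1 := by omega
                simp [f1, f2, hci, hci1, hq1, hq2, Ne.symm hci1, mul_sub, sub_mul, hc3]; rfl
            · intro m hm
              simp only [Fin.val_mk] at hm ⊢
              simp [hci, hci1, hm]
      · intro m hm1 hm2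
        simp only [Fin.val_mk] at hm1 hm2 ⊢
        simp [f2, hm1, hm2, Ne.symm hm2]
    · rw [sum_single_blk (⟨r, hrn⟩ : Fin n), sum_single_blk (⟨r, hrn⟩ : Fin n)]
      · simp only [Fin.val_mk]
        by_cases hrc : r = c
        · obtain rfl := hrc
          simp [hri, hri1]; rfl
        · simp [hri, hri1, hrc]; rfl
      · intro m hm
        simp only [Fin.val_mk] at hm ⊢
        simp [hri, hri1, Ne.symm hm]
      · intro m hm
        simp only [Fin.val_mk] at hm ⊢
        simp [hri, hri1, Ne.symm hm]

end KLM
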